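/- Define the value function recursion J̄_k(s, b) = 1_T(s) + 1_{S\T}(s) · max_{a∈A} ∑_{(s',z)} max_{β∈Λ_{s',k+1}} bᵀβ'_{s,a,s',z,β}, where β'(e) = ∑_{e'} F(s,e,a,s',e',z)β(e'), with terminal condition J̄_N(s,b) = 1_T(s). Then for every k ≤ N and every s ∈ S, the function b ↦ J̄_k(s,b) on the probability simplex is the pointwise maximum of a nonempty finite set of linear functions of b. -/
import Mathlib

lemma sum_sup'_eq_sup'_pi {ι κ : Type*} [Fintype ι] [DecidableEq ι]
    (Λ : ι → Finset κ) (hne : ∀ i, (Λ i).Nonempty) (g : ι → κ → ℝ) :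
    ∑ i, (Λ i).sup' (hne i) (g i) =
      (Fintype.piFinset Λ).sup' (Fintype.piFinset_nonempty.mpr hne)
        (fun σ => ∑ i, g i (σ i)) := by
  apply le_antisymm
  · have h := fun i => Finset.exists_mem_eq_sup' (hne i) (g i)
    choose f hf hval using h
    have hmem : f ∈ Fintype.piFinset Λ := Fintype.mem_piFinset.mpr hf
    calc ∑ i, (Λ i).sup' (hne i) (g i) = ∑ i, g i (f i) := by
          exact Finset.sum_congr rfl (fun i _ => hval i)
      _ ≤ _ := Finset.le_sup' (fun σ => ∑ i, g i (σ i)) hmem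
  · apply Finset.sup'_le
    intro σ hσ
    apply Finset.sum_le_sum
    intro i _
    exact Finset.le_sup' (g i) (Fintype.mem_piFinset.mp hσ i)

lemma rec_case_aux {ι E A : Type*} [Fintype ι] [DecidableEq ι] [Fintype E] [Fintype A]
    [Nonempty A] [Nonempty E]
    (c d : ℝ) (hd0 : 0 ≤ d)
    (G : A → ι → E → E → ℝ) (Λk : ι → Finset (E → ℝ)) (hne : ∀ i, (Λk i).Nonempty) :
    ∃ Λ' : Finset (E → ℝ), ∃ h : Λ'.Nonempty,
      ∀ b : E → ℝ, (∑ e, b e = 1) →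
        c + d * Finset.univ.sup' Finset.univ_nonempty (fun a : A =>
            ∑ i : ι, (Λk i).sup' (hne i) (fun β =>
              ∑ e, b e * ∑ e', G a i e e' * β e')) =
        Λ'.sup' h (fun β => ∑ e, β e * b e) := by
  classical
  set vec : A → (ι → (E → ℝ)) → (E → ℝ) :=
    fun a σ e => c + d * ∑ i : ι, ∑ e', G a i e e' * σ i e' with hvec
  have hpine : (Fintype.piFinset Λk).Nonempty := Fintype.piFinset_nonempty.mpr hne
  have hprodne : ((Finset.univ : Finset A) ×ˢ Fintype.piFinset Λk).Nonempty :=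
    Finset.Nonempty.product Finset.univ_nonempty hpine
  refine ⟨(Finset.univ ×ˢ Fintype.piFinset Λk).image (fun q => vec q.1 q.2),
    hprodne.image _, fun b hb1 => ?_⟩
  have hswap : ∀ a : A,
      (∑ i : ι, (Λk i).sup' (hne i) (fun β => ∑ e, b e * ∑ e', G a i e e' * β e')) =
      (Fintype.piFinset Λk).sup' hpine
        (fun σ => ∑ i : ι, ∑ e, b e * ∑ e', G a i e e' * σ i e') :=
    fun a => sum_sup'_eq_sup'_pi Λk hne _
  simp only [hswap]
  have hmono : ∀ x y : ℝ, c + d * (x ⊔ y) = (c + d * x) ⊔ (c + d * y) := by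
    intro x y
    rw [mul_max_of_nonneg x y hd0, max_add_add_left]
  rw [Finset.comp_sup'_eq_sup'_comp _ (fun x => c + d * x) hmono]
  simp only [Function.comp]
  rw [Finset.sup'_image]
  rw [Finset.sup'_product_left]
  apply Finset.sup'_congr _ rfl
  intro a _
  rw [Finset.comp_sup'_eq_sup'_comp _ (fun x => c + d * x) hmono]
  simp only [Function.comp]
  apply Finset.sup'_congr _ rfl
  intro σ _
  -- pointwise identity of the linear forms
  have : ∀ e : E, vec a σ e = c + d * ∑ i : ι, ∑ e', G a i e e' * σ i e' := fun e => rfl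
  calc c + d * ∑ i : ι, ∑ e, b e * ∑ e', G a i e e' * σ i e'
      = c * ∑ e, b e + d * ∑ e, b e * ∑ i : ι, ∑ e', G a i e e' * σ i e' := by
        rw [hb1, mul_one, Finset.sum_comm]
        simp only [Finset.mul_sum]
    _ = ∑ e, (c + d * ∑ i : ι, ∑ e', G a i e e' * σ i e') * b e := by
        rw [Finset.mul_sum, Finset.mul_sum, ← Finset.sum_add_distrib]
        apply Finset.sum_congr rfl
        intro e _
        ring
    _ = ∑ e, vec a σ e * b e := rfl

theorem value_function_piecewise_linear
    {S E A Z : Type*} [Fintype S] [Fintype E] [Fintype A] [Fintype Z]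
    [DecidableEq S] [Nonempty S] [Nonempty E] [Nonempty A] [Nonempty Z]
    (T : Finset S) (N : ℕ)
    (F : S → E → A → S → E → Z → ℝ) (hF : ∀ s e a s' e' z, 0 ≤ F s e a s' e' z)
    (J : ℕ → S → (E → ℝ) → ℝ) (Λ : ℕ → S → Finset (E → ℝ))
    (hne : ∀ k s, (Λ k s).Nonempty)
    (hΛN : ∀ s : S, Λ N s = {fun _ : E => if s ∈ T then (1 : ℝ) else 0})
    (hJN : ∀ (s : S) (b : E → ℝ), J N s b = if s ∈ T then (1 : ℝ) else 0)
    (hrec : ∀ k < N, ∀ (s : S) (b : E → ℝ),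
      J k s b = (if s ∈ T then (1 : ℝ) else 0) +
        (if s ∉ T then (1 : ℝ) else 0) *
          Finset.univ.sup' Finset.univ_nonempty (fun a : A =>
            ∑ p : S × Z, (Λ (k + 1) p.1).sup' (hne (k + 1) p.1) (fun β =>
              ∑ e, b e * ∑ e', F s e a p.1 e' p.2 * β e'))) :
    ∀ k ≤ N, ∀ s : S, ∃ Λ' : Finset (E → ℝ), ∃ h : Λ'.Nonempty,
      ∀ b : E → ℝ, (∀ e, 0 ≤ b e) → (∑ e, b e = 1) →
        J k s b = Λ'.sup' h (fun β => ∑ e, β e * b e) := by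
  classical
  intro k hk s
  rcases eq_or_lt_of_le hk with rfl | hkN
  · refine ⟨{fun _ : E => if s ∈ T then (1 : ℝ) else 0},
      Finset.singleton_nonempty _, fun b hb hb1 => ?_⟩
    rw [hJN, Finset.sup'_singleton, ← Finset.mul_sum, hb1, mul_one]
  · obtain ⟨Λ', h, hval⟩ := rec_case_aux (if s ∈ T then (1 : ℝ) else 0)
      (if s ∉ T then (1 : ℝ) else 0) (by positivity)
      (fun a (p : S × Z) e e' => F s e a p.1 e' p.2) (fun p => Λ (k + 1) p.1)
      (fun p => hne (k + 1) p.1)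
    refine ⟨Λ', h, fun b hb hb1 => ?_⟩
    rw [hrec k hkN s b, hval b hb1]
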